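/- Let 0 < q₀ < 1 and let X be a random variable with law (1−q₀)·δ_0 + q₀·Unif(0,1). For b ∈ ℕ define the weight w_b(a) = −log₂ P(⌊2^b X⌋ = a) for a ∈ ℤ, and for u ∈ [0,1)^n define c_w(u) = Σ_{i=1}^n w_b(⌊2^b u_i⌋). Then there exist a constant C (depending only on q₀), a real number κ_b (independent of u), and γ_b ∈ ℝ with |γ_b| ≤ C/b, such that for all b ≥ 1 and all u ∈ [0,1)^n: (1/b)·c_w(u) = (1+γ_b)·|{i : ⌊2^b u_i⌋ ≠ 0}| + κ_b. Consequently, for every λ > 0 and y ∈ ℝ^n, the minimizers over u ∈ [0,1)^n of ‖y − u‖₂² + (λ/b)·c_w(u) coincide with the minimizers of ‖y − u‖₂² + λ·(1+γ_b)·|{i : ⌊2^b u_i⌋ ≠ 0}|. -/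

import Mathlib

/-! Every quantization cell other than the zero cell lies inside `(0,1)`, where the source is
uniform, so it has mass `q₀·2⁻ᵇ` and weight `b - log₂ q₀`. The zero cell has mass
`1 - q₀ + q₀·2⁻ᵇ`, so its weight `w_b(0)` stays in `[0, -log₂(1 - q₀)]` for every `b`.
Hence `c_w(u) = k·(b - log₂ q₀) + (n - k)·w_b(0)`, where `k` counts the nonzero cells; dividing
by `b` gives the `ℓ₀` form with `γ_b = (-log₂ q₀ - w_b(0))/b = O(1/b)`, and on the feasible set
the two objectives differ by the constant `λ·κ_b`, so they have the same minimizers. -/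

open MeasureTheory

/-- The law of the sparse source: `(1-q₀)·δ₀ + q₀·Unif(0,1)`. -/
noncomputable def sparseMu (q0 : ℝ) : Measure ℝ :=
  ENNReal.ofReal (1 - q0) • Measure.dirac (0 : ℝ) +
    ENNReal.ofReal q0 • volume.restrict (Set.Ioo (0 : ℝ) 1)

/-- The Q-MAP weight of a quantization cell `a` at bitrate `b`. -/
noncomputable def sparseWeight (q0 : ℝ) (b : ℕ) (a : ℤ) : ℝ :=
  - Real.logb 2 ((sparseMu q0 {x : ℝ | ⌊(2 : ℝ) ^ b * x⌋ = a}).toReal)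

open Real

lemma setOf_floor_mul_eq {c : ℝ} (hc : 0 < c) (a : ℤ) :
    {x : ℝ | ⌊c * x⌋ = a} = Set.Ico (a / c) ((a + 1) / c) := by
  ext x
  simp only [Set.mem_ofPred_eq, Set.mem_Ico, Int.floor_eq_iff, div_le_iff₀ hc, lt_div_iff₀ hc,
    mul_comm c x]

lemma sparseMu_Ico_zero {q0 t : ℝ} (hq0 : 0 ≤ q0) (hq1 : q0 ≤ 1) (ht0 : 0 < t) (ht1 : t ≤ 1) :
    (sparseMu q0 (Set.Ico 0 t)).toReal = 1 - q0 + q0 * t := by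
  have hinter : Set.Ico 0 t ∩ Set.Ioo 0 1 = Set.Ioo (0 : ℝ) t := by
    ext x
    simp only [Set.mem_inter_iff, Set.mem_Ico, Set.mem_Ioo]
    constructor
    · rintro ⟨⟨-, hxt⟩, hx0, -⟩
      exact ⟨hx0, hxt⟩
    · rintro ⟨hx0, hxt⟩
      exact ⟨⟨hx0.le, hxt⟩, hx0, hxt.trans_le ht1⟩
  simp only [sparseMu, Measure.add_apply, Measure.smul_apply, smul_eq_mul,
    Measure.dirac_apply_of_mem (Set.left_mem_Ico.mpr ht0),
    Measure.restrict_apply measurableSet_Ico, hinter, Real.volume_Ioo, sub_zero, mul_one]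
  rw [← ENNReal.ofReal_mul hq0, ← ENNReal.ofReal_add (by linarith) (by positivity),
    ENNReal.toReal_ofReal (by nlinarith)]

lemma sparseMu_Ico_of_pos {q0 s t : ℝ} (hq0 : 0 ≤ q0) (hs : 0 < s) (hst : s ≤ t) (ht : t ≤ 1) :
    (sparseMu q0 (Set.Ico s t)).toReal = q0 * (t - s) := by
  have hsub : Set.Ico s t ⊆ Set.Ioo 0 1 := fun x hx => ⟨hs.trans_le hx.1, hx.2.trans_le ht⟩
  have h0 : (0 : ℝ) ∉ Set.Ico s t := fun h => h.1.not_gt hs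
  simp only [sparseMu, Measure.add_apply, Measure.smul_apply, smul_eq_mul,
    Measure.dirac_apply' _ measurableSet_Ico, Set.indicator_of_notMem h0,
    Measure.restrict_apply measurableSet_Ico, Set.inter_eq_left.mpr hsub, Real.volume_Ico,
    mul_zero, zero_add]
  rw [← ENNReal.ofReal_mul hq0, ENNReal.toReal_ofReal (mul_nonneg hq0 (sub_nonneg.mpr hst))]

lemma sparseWeight_zero_mem_Icc {q0 : ℝ} (hq0 : 0 ≤ q0) (hq1 : q0 < 1) (b : ℕ) :
    sparseWeight q0 b 0 ∈ Set.Icc 0 (-logb 2 (1 - q0)) := by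
  have hp : (0 : ℝ) < 2 ^ b := by positivity
  have hcell : ((2 : ℝ) ^ b)⁻¹ ≤ 1 := inv_le_one_of_one_le₀ (one_le_pow₀ one_le_two)
  rw [sparseWeight, setOf_floor_mul_eq hp, Int.cast_zero, zero_div, zero_add, one_div,
    sparseMu_Ico_zero hq0 hq1.le (inv_pos.mpr hp) hcell]
  have hlow : 1 - q0 ≤ 1 - q0 + q0 * ((2 : ℝ) ^ b)⁻¹ := by nlinarith [inv_pos.mpr hp]
  have hup : 1 - q0 + q0 * ((2 : ℝ) ^ b)⁻¹ ≤ 1 := by nlinarith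
  exact ⟨neg_nonneg.mpr (logb_nonpos one_lt_two (by linarith) hup),
    neg_le_neg (logb_le_logb_of_le one_lt_two (by linarith) hlow)⟩

lemma sparseWeight_of_pos {q0 : ℝ} (hq0 : 0 < q0) {b : ℕ} {a : ℤ} (ha0 : 0 < a)
    (ha : a < 2 ^ b) : sparseWeight q0 b a = b - logb 2 q0 := by
  have hp : (0 : ℝ) < 2 ^ b := by positivity
  have ha0' : (0 : ℝ) < a := by exact_mod_cast ha0
  have ha' : (a : ℝ) + 1 ≤ 2 ^ b := by exact_mod_cast ha
  rw [sparseWeight, setOf_floor_mul_eq hp, sparseMu_Ico_of_pos hq0.le (by positivity)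
    (by gcongr; linarith) ((div_le_one hp).mpr ha'), ← sub_div, add_sub_cancel_left,
    logb_mul hq0.ne' (by positivity), logb_div one_ne_zero hp.ne', logb_one, logb_pow,
    logb_self_eq_one one_lt_two]
  ring

lemma floor_two_pow_mul_mem_Ico (b : ℕ) {x : ℝ} (hx : x ∈ Set.Ico (0 : ℝ) 1) :
    ⌊(2 : ℝ) ^ b * x⌋ ∈ Set.Ico 0 (2 ^ b) := by
  have hp : (0 : ℝ) < 2 ^ b := by positivity
  refine ⟨Int.floor_nonneg.mpr (mul_nonneg hp.le hx.1), Int.floor_lt.mpr ?_⟩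
  push_cast
  nlinarith [hx.2]

lemma sum_sparseWeight {ι : Type*} {q0 : ℝ} (hq0 : 0 < q0) (b : ℕ) (s : Finset ι) {u : ι → ℝ}
    (hu : ∀ i ∈ s, u i ∈ Set.Ico (0 : ℝ) 1) :
    ∑ i ∈ s, sparseWeight q0 b ⌊(2 : ℝ) ^ b * u i⌋ =
      (s.filter (fun i => ⌊(2 : ℝ) ^ b * u i⌋ ≠ 0)).card * (b - logb 2 q0) +
        (s.filter (fun i => ¬⌊(2 : ℝ) ^ b * u i⌋ ≠ 0)).card * sparseWeight q0 b 0 := by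
  rw [← Finset.sum_filter_add_sum_filter_not s (fun i => ⌊(2 : ℝ) ^ b * u i⌋ ≠ 0)]
  congr 1
  · rw [Finset.sum_congr rfl fun i hi => ?_, Finset.sum_const, nsmul_eq_mul]
    obtain ⟨his, hne⟩ := Finset.mem_filter.mp hi
    obtain ⟨hnonneg, hlt⟩ := floor_two_pow_mul_mem_Ico b (hu i his)
    exact sparseWeight_of_pos hq0 (lt_of_le_of_ne hnonneg (Ne.symm hne)) hlt
  · rw [Finset.sum_congr rfl fun i hi => by rw [not_not.mp (Finset.mem_filter.mp hi).2],
      Finset.sum_const, nsmul_eq_mul]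

noncomputable def sparseGamma (q0 : ℝ) (b : ℕ) : ℝ :=
  (-logb 2 q0 - sparseWeight q0 b 0) / b

lemma abs_sparseGamma_le {q0 : ℝ} (hq0 : 0 < q0) (hq1 : q0 < 1) (b : ℕ) :
    |sparseGamma q0 b| ≤ (-logb 2 q0 - logb 2 (1 - q0)) / b := by
  obtain ⟨hW0, hW1⟩ := sparseWeight_zero_mem_Icc hq0.le hq1 b
  have hlog0 : logb 2 q0 ≤ 0 := logb_nonpos one_lt_two hq0.le hq1.le
  have hlog1 : logb 2 (1 - q0) ≤ 0 := logb_nonpos one_lt_two (by linarith) (by linarith)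
  rw [sparseGamma, abs_div, Nat.abs_cast]
  gcongr
  rw [abs_le]
  constructor <;> linarith

lemma one_div_mul_sum_sparseWeight {ι : Type*} {q0 : ℝ} (hq0 : 0 < q0) {b : ℕ} (hb : b ≠ 0)
    (s : Finset ι) {u : ι → ℝ} (hu : ∀ i ∈ s, u i ∈ Set.Ico (0 : ℝ) 1) :
    (1 / b : ℝ) * ∑ i ∈ s, sparseWeight q0 b ⌊(2 : ℝ) ^ b * u i⌋ =
      (1 + sparseGamma q0 b) * (s.filter (fun i => ⌊(2 : ℝ) ^ b * u i⌋ ≠ 0)).card +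
        s.card * sparseWeight q0 b 0 / b := by
  have hcard := Finset.card_filter_add_card_filter_not (s := s)
    (fun i => ⌊(2 : ℝ) ^ b * u i⌋ ≠ 0)
  rw [sum_sparseWeight hq0 b s hu, sparseGamma, ← hcard]
  have hb' : (b : ℝ) ≠ 0 := Nat.cast_ne_zero.mpr hb
  field_simp
  push_cast
  ring

/-- Sparse-source example for the Q-MAP denoiser: up to an additive constant `κ` and a
multiplicative factor `1 + γ_b` with `|γ_b| ≤ C/b`, the normalized Q-MAP cost
`(1/b)·c_w(u)` is the ℓ₀-penalty counting the coordinates with nonzero quantization;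
consequently the Q-MAP minimizers coincide with the ℓ₀-penalized least-squares
minimizers. -/
theorem stmt_13 (q0 : ℝ) (hq0 : 0 < q0) (hq1 : q0 < 1) :
    ∃ C : ℝ, ∃ γ : ℕ → ℝ, ∃ κ : ℕ → ℕ → ℝ,
      ∀ b : ℕ, 1 ≤ b →
        |γ b| ≤ C / b ∧
        ∀ n : ℕ, ∀ u : ℕ → ℝ, (∀ i ∈ Finset.Icc 1 n, u i ∈ Set.Ico (0 : ℝ) 1) →
          (1 / b : ℝ) * (∑ i ∈ Finset.Icc 1 n, sparseWeight q0 b ⌊(2 : ℝ) ^ b * u i⌋) =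
            (1 + γ b) *
              ((Finset.Icc 1 n).filter (fun i => ⌊(2 : ℝ) ^ b * u i⌋ ≠ 0)).card + κ n b ∧
          (∀ lam : ℝ, 0 < lam → ∀ y : ℕ → ℝ,
            ((∀ w : ℕ → ℝ, (∀ i ∈ Finset.Icc 1 n, w i ∈ Set.Ico (0 : ℝ) 1) →
                (∑ i ∈ Finset.Icc 1 n, (y i - u i) ^ 2) +
                  (lam / b) * ∑ i ∈ Finset.Icc 1 n, sparseWeight q0 b ⌊(2 : ℝ) ^ b * u i⌋ ≤
                (∑ i ∈ Finset.Icc 1 n, (y i - w i) ^ 2) +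
                  (lam / b) * ∑ i ∈ Finset.Icc 1 n, sparseWeight q0 b ⌊(2 : ℝ) ^ b * w i⌋)
              ↔
             (∀ w : ℕ → ℝ, (∀ i ∈ Finset.Icc 1 n, w i ∈ Set.Ico (0 : ℝ) 1) →
                (∑ i ∈ Finset.Icc 1 n, (y i - u i) ^ 2) +
                  lam * (1 + γ b) *
                    ((Finset.Icc 1 n).filter (fun i => ⌊(2 : ℝ) ^ b * u i⌋ ≠ 0)).card ≤
                (∑ i ∈ Finset.Icc 1 n, (y i - w i) ^ 2) +
                  lam * (1 + γ b) *
                    ((Finset.Icc 1 n).filter (fun i => ⌊(2 : ℝ) ^ b * w i⌋ ≠ 0)).card))) := by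
  refine ⟨-logb 2 q0 - logb 2 (1 - q0), sparseGamma q0,
    fun n b => n * sparseWeight q0 b 0 / b, fun b hb => ⟨abs_sparseGamma_le hq0 hq1 b, ?_⟩⟩
  intro n u hu
  have hcost : ∀ v : ℕ → ℝ, (∀ i ∈ Finset.Icc 1 n, v i ∈ Set.Ico (0 : ℝ) 1) →
      (1 / b : ℝ) * ∑ i ∈ Finset.Icc 1 n, sparseWeight q0 b ⌊(2 : ℝ) ^ b * v i⌋ =
        (1 + sparseGamma q0 b) *
          ((Finset.Icc 1 n).filter (fun i => ⌊(2 : ℝ) ^ b * v i⌋ ≠ 0)).card +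
            n * sparseWeight q0 b 0 / b := fun v hv => by
    rw [one_div_mul_sum_sparseWeight hq0 (by omega) _ hv, Nat.card_Icc, Nat.add_sub_cancel]
  refine ⟨hcost u hu, fun lam _ y => forall₂_congr fun w hw => ?_⟩
  have hpenalty : ∀ v : ℕ → ℝ, (∀ i ∈ Finset.Icc 1 n, v i ∈ Set.Ico (0 : ℝ) 1) →
      (lam / b) * ∑ i ∈ Finset.Icc 1 n, sparseWeight q0 b ⌊(2 : ℝ) ^ b * v i⌋ =
        lam * (1 + sparseGamma q0 b) *
          ((Finset.Icc 1 n).filter (fun i => ⌊(2 : ℝ) ^ b * v i⌋ ≠ 0)).card +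
            lam * (n * sparseWeight q0 b 0 / b) := fun v hv => by
    rw [div_eq_mul_one_div lam, mul_assoc, hcost v hv]
    ring
  rw [hpenalty u hu, hpenalty w hw, ← add_assoc, ← add_assoc, add_le_add_iff_right]
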